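/- arXiv:1507.00080 — 2 statements merged into one kernel-verified Lean document; each statement's English description precedes it below -/
import Mathlib

section
/- Let θ^H ∈ L²([0,L]) be mean-free and a function of x₁ alone, and let u₂^H(x₁,t) solve ∂_t u₂ = ν∂²_{x₁}u₂ + gθ^H with periodic mean-free initial data a^H. Then (u,θ,p) = ((0,u₂^H), θ^H, 0) solves the 2D semi-dissipative Boussinesq system, and as t → ∞ the solution converges in L² to the steady state ((0,ū₂), θ^H) where ū₂ is the unique mean-free periodic solution of ν ū₂'' = −gθ^H. -/
noncomputable section
open MeasureTheory Real Filter Topology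
open scoped RealInnerProductSpace

/-- The 2D Euclidean plane (the torus is realized by `L`-periodic functions). -/
abbrev E2 := EuclideanSpace ℝ (Fin 2)

/-- Standard basis vector. -/
def eb (i : Fin 2) : E2 := EuclideanSpace.single i 1

/-- Partial derivative of a scalar field. -/
def pd (f : E2 → ℝ) (i : Fin 2) (x : E2) : ℝ := fderiv ℝ f x (eb i)

/-- Gradient of a scalar field. -/
def grad (f : E2 → ℝ) (x : E2) : E2 := gradient f x

/-- Laplacian of a scalar field. -/
def lap (f : E2 → ℝ) (x : E2) : ℝ := ∑ i, pd (fun y => pd f i y) i x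

/-- Divergence of a vector field. -/
def divg (u : E2 → E2) (x : E2) : ℝ := ∑ i, fderiv ℝ u x (eb i) i

/-- Componentwise Laplacian of a vector field. -/
def vecLap (u : E2 → E2) (x : E2) : E2 :=
  ∑ j, EuclideanSpace.single j (lap (fun y => u y j) x)

/-- Fundamental domain `[0,L)²` of the torus. -/
def Q (L : ℝ) : Set E2 := {x | ∀ i, x i ∈ Set.Ico (0:ℝ) L}

/-- `L`-periodicity in each coordinate direction. -/
def Periodic2 {α : Type*} (L : ℝ) (f : E2 → α) : Prop := ∀ x i, f (x + L • eb i) = f x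

/-- The upward gravity vector `(0, g)`. -/
def gvec (g : ℝ) : E2 := EuclideanSpace.single 1 g

/-- Classical form of the semi-dissipative 2D Boussinesq system on the time set `I`:
momentum, transport and incompressibility equations. -/
def Boussinesq (ν g L : ℝ) (I : Set ℝ) (u : ℝ → E2 → E2) (θ p : ℝ → E2 → ℝ) : Prop :=
  ∀ t ∈ I, ∀ x : E2,
    deriv (fun s => u s x) t + fderiv ℝ (u t) x (u t x) + grad (p t) x
        = ν • vecLap (u t) x + θ t x • gvec g ∧
    deriv (fun s => θ s x) t + ⟪u t x, grad (θ t) x⟫ = 0 ∧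
    divg (u t) x = 0 ∧
    Periodic2 L (u t) ∧ Periodic2 L (θ t) ∧ Periodic2 L (p t)

/-- Squared `L²` norm (on the fundamental domain) of a vector field. -/
def l2V (L : ℝ) (u : E2 → E2) : ℝ := ∫ x in Q L, ‖u x‖^2

/-- Squared `L²` norm of a scalar field. -/
def l2S (L : ℝ) (f : E2 → ℝ) : ℝ := ∫ x in Q L, (f x)^2

/-- Squared (homogeneous) `H¹` norm of a vector field. -/
def h1V (L : ℝ) (u : E2 → E2) : ℝ := ∫ x in Q L, ∑ i, ‖grad (fun y => u y i) x‖^2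

/-- Mean-free scalar field. -/
def MeanFreeS (L : ℝ) (f : E2 → ℝ) : Prop := (∫ x in Q L, f x) = 0

/-- Mean-free vector field. -/
def MeanFreeV (L : ℝ) (u : E2 → E2) : Prop := (∫ x in Q L, u x) = 0


-- ===== auxiliary machinery =====
abbrev proj0 : E2 →L[ℝ] ℝ := EuclideanSpace.proj (0:Fin 2)

lemma hasFDerivAt_proj (x : E2) :
    HasFDerivAt (fun y : E2 => y 0) (proj0 : E2 →L[ℝ] ℝ) x :=
  (proj0 : E2 →L[ℝ] ℝ).hasFDerivAt

lemma hasFDerivAt_comp_proj (φ : ℝ → ℝ) (hφ : Differentiable ℝ φ) (x : E2) :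
    HasFDerivAt (fun y : E2 => φ (y 0)) ((deriv φ (x 0)) • (proj0 : E2 →L[ℝ] ℝ)) x := by
  have h2 := (hφ (x 0)).hasDerivAt
  have := h2.comp_hasFDerivAt x (hasFDerivAt_proj x)
  exact this

lemma fderiv_comp_proj (φ : ℝ → ℝ) (hφ : Differentiable ℝ φ) (x : E2) :
    fderiv ℝ (fun y : E2 => φ (y 0)) x = (deriv φ (x 0)) • (proj0 : E2 →L[ℝ] ℝ) :=
  (hasFDerivAt_comp_proj φ hφ x).fderiv

lemma eb_apply (i j : Fin 2) : eb i j = if j = i then 1 else 0 := by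
  simp [eb, EuclideanSpace.single_apply]

lemma proj0_eb (i : Fin 2) : proj0 (eb i) = if i = 0 then 1 else 0 := by
  fin_cases i <;> simp [eb]

lemma pd_comp_proj (φ : ℝ → ℝ) (hφ : Differentiable ℝ φ) (i : Fin 2) (x : E2) :
    pd (fun y : E2 => φ (y 0)) i x = deriv φ (x 0) * (if i = 0 then 1 else 0) := by
  rw [pd, fderiv_comp_proj φ hφ x]
  fin_cases i <;> simp [eb]

lemma contDiff_deriv (φ : ℝ → ℝ) (hφ : ContDiff ℝ (⊤:ℕ∞) φ) : ContDiff ℝ (⊤:ℕ∞) (deriv φ) :=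
  (contDiff_infty_iff_deriv.mp hφ).2

lemma lap_comp_proj (φ : ℝ → ℝ) (hφ : ContDiff ℝ (⊤:ℕ∞) φ) (x : E2) :
    lap (fun y : E2 => φ (y 0)) x = deriv (deriv φ) (x 0) := by
  have hφd : Differentiable ℝ φ := hφ.differentiable (by simp)
  have hφd' : Differentiable ℝ (deriv φ) := (contDiff_deriv φ hφ).differentiable (by simp)
  have h0 : (fun y : E2 => pd (fun y : E2 => φ (y 0)) 0 y) = fun y : E2 => deriv φ (y 0) := by
    funext y; simp [pd_comp_proj φ hφd 0 y]
  have h1 : (fun y : E2 => pd (fun y : E2 => φ (y 0)) 1 y) = fun _ : E2 => (0:ℝ) := by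
    funext y; simp [pd_comp_proj φ hφd 1 y]
  rw [lap, Fin.sum_univ_two, h0, h1]
  rw [pd_comp_proj (deriv φ) hφd' 0 x]
  simp [pd]

lemma lap_zero (x : E2) : lap (fun _ : E2 => (0:ℝ)) x = 0 := by
  have : (fun y : E2 => pd (fun _ : E2 => (0:ℝ)) 0 y) = fun _ : E2 => (0:ℝ) := by
    funext y; simp [pd, fderiv_const]
  have h1 : (fun y : E2 => pd (fun _ : E2 => (0:ℝ)) 1 y) = fun _ : E2 => (0:ℝ) := by
    funext y; simp [pd, fderiv_const]
  rw [lap, Fin.sum_univ_two, this, h1]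
  simp [pd, fderiv_const]

lemma single_eq_smul (c : ℝ) : EuclideanSpace.single (1:Fin 2) c = c • eb 1 := by
  ext j; simp [eb, EuclideanSpace.single_apply]

lemma hasFDerivAt_single_comp (φ : ℝ → ℝ) (hφ : Differentiable ℝ φ) (x : E2) :
    HasFDerivAt (fun y : E2 => EuclideanSpace.single (1:Fin 2) (φ (y 0)))
      (((deriv φ (x 0)) • (proj0 : E2 →L[ℝ] ℝ)).smulRight (eb 1)) x := by
  have := (hasFDerivAt_comp_proj φ hφ x).smul_const (eb 1)
  simpa [single_eq_smul] using this


lemma l2V_single (L : ℝ) (hL : 0 ≤ L) (h : ℝ → ℝ) :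
    l2V L (fun x => EuclideanSpace.single (1:Fin 2) (h (x 0)))
      = (∫ z in Set.Ico (0:ℝ) L, (h z)^2) * L := by
  have hnorm : ∀ x : E2, ‖EuclideanSpace.single (1:Fin 2) (h (x 0))‖^2 = (h (x 0))^2 := by
    intro x; rw [EuclideanSpace.norm_single]; exact sq_abs _
  rw [l2V]
  simp_rw [hnorm]
  have hQ : Q L = (MeasurableEquiv.toLp 2 (Fin 2 → ℝ)).symm ⁻¹'
      (Set.univ.pi fun _ : Fin 2 => Set.Ico (0:ℝ) L) := by
    ext x; simp [Q, Set.mem_pi]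
  have h1 := (EuclideanSpace.volume_preserving_symm_measurableEquiv_toLp (Fin 2)).setIntegral_preimage_emb
    (MeasurableEquiv.toLp 2 (Fin 2 → ℝ)).symm.measurableEmbedding
    (fun y : Fin 2 → ℝ => (h (y 0))^2) (Set.univ.pi fun _ : Fin 2 => Set.Ico (0:ℝ) L)
  have hpi : (Set.univ.pi fun _ : Fin 2 => Set.Ico (0:ℝ) L) =
      (MeasurableEquiv.piFinTwo fun _ : Fin 2 => ℝ) ⁻¹'
        ((Set.Ico (0:ℝ) L) ×ˢ (Set.Ico (0:ℝ) L)) := by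
    ext y; simp [Set.mem_pi, Fin.forall_fin_two, MeasurableEquiv.piFinTwo_apply]
  have h2 := (volume_preserving_piFinTwo fun _ : Fin 2 => ℝ).setIntegral_preimage_emb
    (MeasurableEquiv.piFinTwo fun _ : Fin 2 => ℝ).measurableEmbedding
    (fun p : ℝ × ℝ => (h p.1)^2) ((Set.Ico (0:ℝ) L) ×ˢ (Set.Ico (0:ℝ) L))
  have h3 := MeasureTheory.setIntegral_prod_mul (μ := (volume : Measure ℝ))
    (ν := (volume : Measure ℝ)) (fun z => (h z)^2) (fun _ => (1:ℝ))
    (Set.Ico (0:ℝ) L) (Set.Ico (0:ℝ) L)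
  simp only [mul_one] at h3
  calc (∫ x in Q L, (h (x 0))^2)
      = ∫ y in (Set.univ.pi fun _ : Fin 2 => Set.Ico (0:ℝ) L), (h (y 0))^2 := by
        rw [hQ]; exact h1
    _ = ∫ p in ((Set.Ico (0:ℝ) L) ×ˢ (Set.Ico (0:ℝ) L)), (h p.1)^2 := by
        rw [hpi]; exact h2
    _ = (∫ z in Set.Ico (0:ℝ) L, (h z)^2) * ∫ _y in Set.Ico (0:ℝ) L, (1:ℝ) := h3
    _ = (∫ z in Set.Ico (0:ℝ) L, (h z)^2) * L := by
        simp [Real.volume_Ico, ENNReal.toReal_ofReal hL, hL]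
-- ===== 1D parametric calculus =====
def pdz (f : ℝ × ℝ → ℝ) (p : ℝ × ℝ) : ℝ := fderiv ℝ f p (0, 1)

lemma contDiff_pdz {f : ℝ × ℝ → ℝ} (hf : ContDiff ℝ (⊤:ℕ∞) f) :
    ContDiff ℝ (⊤:ℕ∞) (pdz f) :=
  (hf.fderiv_right (m := (⊤:ℕ∞)) (by exact_mod_cast le_refl _)).clm_apply
    (contDiff_const (c := ((0:ℝ), (1:ℝ))))

lemma hasDerivAt_pdz {f : ℝ × ℝ → ℝ} (hf : ContDiff ℝ (⊤:ℕ∞) f) (t z : ℝ) :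
    HasDerivAt (fun z' => f (t, z')) (pdz f (t, z)) z := by
  have hd : HasFDerivAt f (fderiv ℝ f (t, z)) (t, z) :=
    ((hf.differentiable (by simp)) (t, z)).hasFDerivAt
  have hz : HasDerivAt (fun z' : ℝ => ((t, z') : ℝ × ℝ)) ((0, 1) : ℝ × ℝ) z :=
    HasDerivAt.prodMk (hasDerivAt_const z t) (hasDerivAt_id z)
  exact hd.comp_hasDerivAt z hz

lemma deriv_slice {f : ℝ × ℝ → ℝ} (hf : ContDiff ℝ (⊤:ℕ∞) f) (t : ℝ) :
    deriv (fun z' => f (t, z')) = fun z => pdz f (t, z) :=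
  funext fun z => (hasDerivAt_pdz hf t z).deriv

-- differentiation under the interval integral
lemma hasDerivAt_param (G G' : ℝ × ℝ → ℝ) (a b : ℝ)
    (hG : Continuous G) (hG' : Continuous G')
    (hd : ∀ p : ℝ × ℝ, HasDerivAt (fun s => G (s, p.2)) (G' p) p.1) (t₀ : ℝ) :
    HasDerivAt (fun t => ∫ z in a..b, G (t, z)) (∫ z in a..b, G' (t₀, z)) t₀ := by
  have hK : IsCompact ((Set.Icc (t₀ - 1) (t₀ + 1)) ×ˢ (Set.uIcc a b)) :=
    isCompact_Icc.prod isCompact_uIcc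
  obtain ⟨C, hC⟩ := hK.exists_bound_of_continuousOn hG'.continuousOn
  refine (intervalIntegral.hasDerivAt_integral_of_dominated_loc_of_deriv_le
    (F := fun t z => G (t, z)) (F' := fun t z => G' (t, z)) (bound := fun _ => C)
    (a := a) (b := b) (μ := volume) (x₀ := t₀) (Metric.ball_mem_nhds t₀ one_pos) ?_ ?_ ?_ ?_ ?_ ?_).2
  · filter_upwards with x
    exact (hG.comp (continuous_const.prodMk continuous_id)).aestronglyMeasurable
  · exact (hG.comp (continuous_const.prodMk continuous_id)).intervalIntegrable a b
  · exact (hG'.comp (continuous_const.prodMk continuous_id)).aestronglyMeasurable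
  · refine Filter.Eventually.of_forall fun z hz => ?_
    intro x hx
    refine hC (x, z) ⟨?_, Set.uIoc_subset_uIcc hz⟩
    have h1 : |x - t₀| < 1 := by simpa [Real.dist_eq] using Metric.mem_ball.mp hx
    have h2 := abs_lt.mp h1
    exact ⟨by linarith [h2.1], by linarith [h2.2]⟩
  · exact intervalIntegrable_const
  · exact Filter.Eventually.of_forall fun z _ x _ => hd (x, z)

-- ===== Poincaré inequality on [0, L] =====
lemma poincare (L : ℝ) (hL : 0 < L) (f f' : ℝ → ℝ)
    (hf : ∀ z, HasDerivAt f (f' z) z) (hf'c : Continuous f')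
    (hmf : (∫ z in (0:ℝ)..L, f z) = 0) :
    (∫ z in (0:ℝ)..L, (f z)^2) ≤ L^2 * ∫ z in (0:ℝ)..L, (f' z)^2 := by
  have hfc : Continuous f := Differentiable.continuous (fun z => (hf z).differentiableAt)
  set I1 := ∫ z in (0:ℝ)..L, |f' z| with hI1
  have hI1nn : 0 ≤ I1 :=
    intervalIntegral.integral_nonneg hL.le (fun _ _ => abs_nonneg _)
  -- pointwise bound
  have bdd : ∀ z ∈ Set.Icc (0:ℝ) L, |f z| ≤ I1 := by
    intro z hz
    have key : ∀ y ∈ Set.Icc (0:ℝ) L, |f z - f y| ≤ I1 := by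
      intro y hy
      have hfy : f z - f y = ∫ u in y..z, f' u :=
        (intervalIntegral.integral_eq_sub_of_hasDerivAt (fun u _ => hf u)
          (hf'c.intervalIntegrable _ _)).symm
      rw [hfy]
      calc |∫ u in y..z, f' u| ≤ abs (∫ u in y..z, |f' u|) := by
            simpa using intervalIntegral.norm_integral_le_abs_integral_norm
              (f := f') (a := y) (b := z) (μ := volume)
        _ ≤ abs (∫ u in (0:ℝ)..L, |f' u|) := by
            refine intervalIntegral.abs_integral_mono_interval (μ := volume) ?_ ?_
              ((hf'c.abs).intervalIntegrable _ _)
            · rw [Set.uIoc, Set.uIoc]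
              refine Set.Ioc_subset_Ioc ?_ ?_
              · simp [le_min_iff, hy.1, hz.1]
              · simp [max_le_iff, hy.2, hz.2]
            · exact Filter.Eventually.of_forall fun u => abs_nonneg _
        _ = ∫ u in (0:ℝ)..L, |f' u| := abs_of_nonneg hI1nn
    have havg : (∫ y in (0:ℝ)..L, (f z - f y)) = L * f z := by
      rw [intervalIntegral.integral_sub intervalIntegrable_const
        (hfc.intervalIntegrable _ _), hmf, intervalIntegral.integral_const]
      simp [smul_eq_mul]
    have h1 : L * |f z| ≤ L * I1 := by
      calc L * |f z| = |∫ y in (0:ℝ)..L, (f z - f y)| := by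
            rw [havg, abs_mul, abs_of_pos hL]
        _ ≤ ∫ y in (0:ℝ)..L, |f z - f y| :=
            intervalIntegral.abs_integral_le_integral_abs hL.le
        _ ≤ ∫ _y in (0:ℝ)..L, I1 := by
            refine intervalIntegral.integral_mono_on hL.le ?_ intervalIntegrable_const ?_
            · exact ((continuous_const.sub hfc).abs).intervalIntegrable _ _
            · exact key
        _ = L * I1 := by rw [intervalIntegral.integral_const]; simp [smul_eq_mul]
    exact le_of_mul_le_mul_left (by linarith) hL
  -- Cauchy–Schwarz via nonnegativity
  have hCS : I1^2 ≤ L * ∫ z in (0:ℝ)..L, (f' z)^2 := by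
    set c := I1 / L with hc
    have expand : (∫ y in (0:ℝ)..L, (|f' y| - c)^2)
        = (∫ z in (0:ℝ)..L, (f' z)^2) - 2*c*I1 + L*c^2 := by
      have hptw : ∀ y, (|f' y| - c)^2 = (f' y)^2 - 2*c*|f' y| + c^2 := by
        intro y; rw [sub_sq, sq_abs]; ring
      simp_rw [hptw]
      rw [intervalIntegral.integral_add (f := fun y => f' y ^ 2 - 2 * c * |f' y|) (g := fun _ => c ^ 2)
          ((((hf'c.pow 2)).sub (continuous_const.mul (hf'c.abs))).intervalIntegrable _ _)
          intervalIntegrable_const,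
        intervalIntegral.integral_sub (f := fun y => f' y ^ 2) (g := fun y => 2 * c * |f' y|) ((hf'c.pow 2).intervalIntegrable _ _)
          ((continuous_const.mul (hf'c.abs)).intervalIntegrable _ _),
        intervalIntegral.integral_const_mul, intervalIntegral.integral_const]
      simp [smul_eq_mul, ← hI1]
      try ring
    have hnn : 0 ≤ ∫ y in (0:ℝ)..L, (|f' y| - c)^2 :=
      intervalIntegral.integral_nonneg hL.le (fun _ _ => sq_nonneg _)
    rw [expand] at hnn
    have hcL : c * L = I1 := by rw [hc]; field_simp [hL.ne']
    nlinarith [sq_nonneg (I1 - c*L)]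
  -- combine
  have hmono : (∫ z in (0:ℝ)..L, (f z)^2) ≤ ∫ _z in (0:ℝ)..L, I1^2 := by
    refine intervalIntegral.integral_mono_on hL.le
      ((hfc.pow 2).intervalIntegrable _ _) intervalIntegrable_const ?_
    intro z hz
    have := bdd z hz
    calc (f z)^2 = |f z|^2 := (sq_abs _).symm
      _ ≤ I1^2 := by nlinarith [abs_nonneg (f z)]
  have : (∫ _z in (0:ℝ)..L, I1^2) = L * I1^2 := by
    rw [intervalIntegral.integral_const]; simp [smul_eq_mul]
  calc (∫ z in (0:ℝ)..L, (f z)^2) ≤ L * I1^2 := hmono.trans_eq this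
    _ ≤ L * (L * ∫ z in (0:ℝ)..L, (f' z)^2) := mul_le_mul_of_nonneg_left hCS hL.le
    _ = L^2 * ∫ z in (0:ℝ)..L, (f' z)^2 := by ring

-- ===== exponential decay =====
lemma decay (c : ℝ) (hc : 0 < c) (E E' : ℝ → ℝ)
    (hE : ∀ t, HasDerivAt E (E' t) t) (hle : ∀ t, E' t ≤ -c * E t)
    (hnn : ∀ t, 0 ≤ E t) : Filter.Tendsto E Filter.atTop (nhds 0) := by
  set G := fun t => E t * Real.exp (c * t) with hGdef
  have hG : ∀ t, HasDerivAt G ((E' t + c * E t) * Real.exp (c * t)) t := by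
    intro t
    have h1 : HasDerivAt (fun t => Real.exp (c * t)) (c * Real.exp (c * t)) t := by
      have := (Real.hasDerivAt_exp (c*t)).comp t ((hasDerivAt_id t).const_mul c)
      exact this.congr_deriv (by ring)
    have h2 := (hE t).fun_mul h1
    exact h2.congr_deriv (by ring)
  have hmono : Antitone G := by
    refine antitone_of_deriv_nonpos (fun t => (hG t).differentiableAt) (fun t => ?_)
    rw [(hG t).deriv]
    have h3 := hle t
    nlinarith [Real.exp_pos (c*t), hnn t]
  have hbound : ∀ t, 0 ≤ t → E t ≤ E 0 * Real.exp (-(c * t)) := by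
    intro t ht
    have h2 : G t ≤ G 0 := hmono ht
    have h4 : E t = G t * Real.exp (-(c*t)) := by
      rw [hGdef]; simp [mul_assoc, ← Real.exp_add]
    have h5 : G 0 = E 0 := by simp [hGdef]
    rw [h4, ← h5]
    have := (Real.exp_pos (-(c*t))).le
    exact mul_le_mul_of_nonneg_right h2 this
  have hlim : Filter.Tendsto (fun t => E 0 * Real.exp (-(c * t)))
      Filter.atTop (nhds 0) := by
    have h6 : Filter.Tendsto (fun t : ℝ => c * t) Filter.atTop Filter.atTop :=
      Filter.Tendsto.const_mul_atTop hc Filter.tendsto_id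
    have h7 : Filter.Tendsto (fun t : ℝ => -(c * t)) Filter.atTop Filter.atBot :=
      Filter.tendsto_neg_atBot_iff.mpr h6
    have h8 := Real.tendsto_exp_atBot.comp h7
    have := h8.const_mul (E 0)
    simpa using this
  refine squeeze_zero' ?_ ?_ hlim
  · filter_upwards with t using hnn t
  · filter_upwards [Filter.eventually_ge_atTop (0:ℝ)] with t ht using hbound t ht
lemma gradient_comp_proj (φ : ℝ → ℝ) (hφ : Differentiable ℝ φ) (x : E2) :
    gradient (fun y : E2 => φ (y 0)) x = (deriv φ (x 0)) • eb 0 := by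
  have h := hasFDerivAt_comp_proj φ hφ x
  have hg : HasGradientAt (fun y : E2 => φ (y 0)) ((deriv φ (x 0)) • eb 0) x := by
    rw [hasGradientAt_iff_hasFDerivAt]
    refine h.congr_fderiv ?_
    ext w
    simp [real_inner_smul_left, eb, EuclideanSpace.inner_single_left]
    try ring
  exact hg.gradient

theorem part1 (ν g L : ℝ)
    (θH : ℝ → ℝ) (u2 : ℝ → ℝ → ℝ)
    (hθ_per : ∀ z, θH (z + L) = θH z)
    (hθ_sm : ContDiff ℝ (⊤ : ℕ∞) θH)
    (hu2_sm : ContDiff ℝ (⊤ : ℕ∞) (Function.uncurry u2))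
    (hu2_per : ∀ t z, u2 t (z + L) = u2 t z)
    (hu2_heat : ∀ t z, HasDerivAt (fun s => u2 s z)
      (ν * deriv (deriv (u2 t)) z + g * θH z) t) :
    Boussinesq ν g L Set.univ
        (fun t x => EuclideanSpace.single 1 (u2 t (x 0)))
        (fun _ x => θH (x 0)) (fun _ _ => 0) := by
  have hθ : ContDiff ℝ (⊤:ℕ∞) θH := hθ_sm.of_le (mod_cast le_top)
  have hu2 : ContDiff ℝ (⊤:ℕ∞) (Function.uncurry u2) := hu2_sm.of_le (mod_cast le_top)
  have hu2t : ∀ t, ContDiff ℝ (⊤:ℕ∞) (u2 t) := fun t =>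
    hu2.comp ((contDiff_const (c := t)).prodMk contDiff_id)
  have hu2td : ∀ t, Differentiable ℝ (u2 t) := fun t =>
    (hu2t t).differentiable (by simp)
  intro t _ x
  set z := x 0 with hz
  refine ⟨?_, ?_, ?_, ?_, ?_, ?_⟩
  · -- momentum
    have hA : deriv (fun s => EuclideanSpace.single (1:Fin 2) (u2 s z)) t
        = EuclideanSpace.single (1:Fin 2) (ν * deriv (deriv (u2 t)) z + g * θH z) := by
      have := ((hu2_heat t z).smul_const (eb 1)).deriv
      simp only [single_eq_smul] at this ⊢
      exact this
    have hconv : fderiv ℝ (fun y : E2 => EuclideanSpace.single (1:Fin 2) (u2 t (y 0))) x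
        (EuclideanSpace.single (1:Fin 2) (u2 t z)) = 0 := by
      rw [(hasFDerivAt_single_comp (u2 t) (hu2td t) x).fderiv]
      simp [EuclideanSpace.single_apply]
    have hlap : vecLap (fun y : E2 => EuclideanSpace.single (1:Fin 2) (u2 t (y 0))) x
        = EuclideanSpace.single (1:Fin 2) (deriv (deriv (u2 t)) z) := by
      rw [vecLap, Fin.sum_univ_two]
      have e0 : (fun y : E2 => (EuclideanSpace.single (1:Fin 2) (u2 t (y 0))) 0)
          = fun _ : E2 => (0:ℝ) := by
        funext y; simp [EuclideanSpace.single_apply]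
      have e1 : (fun y : E2 => (EuclideanSpace.single (1:Fin 2) (u2 t (y 0))) 1)
          = fun y : E2 => u2 t (y 0) := by
        funext y; simp [EuclideanSpace.single_apply]
      rw [e0, e1, lap_zero, lap_comp_proj (u2 t) (hu2t t) x]
      have : EuclideanSpace.single (0:Fin 2) (0:ℝ) = 0 := by
        ext j; simp [EuclideanSpace.single_apply]
      rw [this, zero_add]
    have hgrad : grad (fun _ : E2 => (0:ℝ)) x = 0 := by
      rw [grad]; exact gradient_const x 0
    rw [hA, hconv, hgrad, hlap]
    ext j
    fin_cases j <;>
      simp [EuclideanSpace.single_apply, gvec] <;> ring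
  · -- transport
    have h1 : deriv (fun _ : ℝ => θH z) t = 0 := deriv_const t _
    have h2 : grad (fun y : E2 => θH (y 0)) x = (deriv θH z) • eb 0 := by
      rw [grad]; exact gradient_comp_proj θH (hθ.differentiable (by simp)) x
    rw [h1, h2]
    simp [real_inner_smul_right, eb, EuclideanSpace.inner_single_left,
      EuclideanSpace.single_apply]
  · -- divergence
    rw [divg, Fin.sum_univ_two, (hasFDerivAt_single_comp (u2 t) (hu2td t) x).fderiv]
    simp [eb, EuclideanSpace.single_apply]
  · -- periodicity of u
    intro y i
    fin_cases i
    · have h0 : (y + L • eb 0) 0 = y 0 + L := by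
        simp [eb, EuclideanSpace.single_apply]
      show EuclideanSpace.single (1:Fin 2) (u2 t ((y + L • eb 0) 0)) = _
      rw [h0, hu2_per]
    · have h1 : (y + L • eb 1) 0 = y 0 := by
        simp [eb, EuclideanSpace.single_apply]
      show EuclideanSpace.single (1:Fin 2) (u2 t ((y + L • eb 1) 0)) = _
      rw [h1]
  · intro y i
    fin_cases i
    · have h0 : (y + L • eb 0) 0 = y 0 + L := by
        simp [eb, EuclideanSpace.single_apply]
      show θH ((y + L • eb 0) 0) = _
      rw [h0, hθ_per]
    · have h1 : (y + L • eb 1) 0 = y 0 := by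
        simp [eb, EuclideanSpace.single_apply]
      show θH ((y + L • eb 1) 0) = _
      rw [h1]
  · intro y i; rfl
theorem part2 (ν g L : ℝ) (hν : 0 < ν) (hL : 0 < L)
    (θH aH ubar : ℝ → ℝ) (u2 : ℝ → ℝ → ℝ)
    (ha_mf : (∫ z in (0:ℝ)..L, aH z) = 0)
    (hu2_sm : ContDiff ℝ (⊤ : ℕ∞) (Function.uncurry u2))
    (hu2_init : ∀ z, u2 0 z = aH z)
    (hu2_per : ∀ t z, u2 t (z + L) = u2 t z)
    (hu2_heat : ∀ t z, HasDerivAt (fun s => u2 s z)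
      (ν * deriv (deriv (u2 t)) z + g * θH z) t)
    (hubar_sm : ContDiff ℝ (⊤ : ℕ∞) ubar)
    (hubar_per : ∀ z, ubar (z + L) = ubar z)
    (hubar_mf : (∫ z in (0:ℝ)..L, ubar z) = 0)
    (hubar_ode : ∀ z, ν * deriv (deriv ubar) z = -(g * θH z)) :
    Filter.Tendsto
        (fun t => l2V L (fun x =>
          EuclideanSpace.single (1 : Fin 2) (u2 t (x 0)) -
            EuclideanSpace.single (1 : Fin 2) (ubar (x 0))))
        Filter.atTop (nhds 0) := by
  have hu2 : ContDiff ℝ (⊤:ℕ∞) (Function.uncurry u2) := hu2_sm.of_le (mod_cast le_top)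
  have hub : ContDiff ℝ (⊤:ℕ∞) ubar := hubar_sm.of_le (mod_cast le_top)
  have hubd : Differentiable ℝ ubar := hub.differentiable (by simp)
  have hubd' : Differentiable ℝ (deriv ubar) :=
    (contDiff_deriv ubar hub).differentiable (by simp)
  set W : ℝ × ℝ → ℝ := fun p => u2 p.1 p.2 - ubar p.2 with hWdef
  have hW : ContDiff ℝ (⊤:ℕ∞) W := hu2.sub (hub.comp contDiff_snd)
  have hu2t : ∀ t, ContDiff ℝ (⊤:ℕ∞) (u2 t) := fun t =>
    hu2.comp ((contDiff_const (c := t)).prodMk contDiff_id)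
  have hu2td : ∀ t, Differentiable ℝ (u2 t) := fun t =>
    (hu2t t).differentiable (by simp)
  have hu2td' : ∀ t, Differentiable ℝ (deriv (u2 t)) := fun t =>
    (contDiff_deriv _ (hu2t t)).differentiable (by simp)
  -- identification of space derivatives
  have hwz_eq : ∀ t z, pdz W (t, z) = deriv (u2 t) z - deriv ubar z := by
    intro t z
    have h1 := hasDerivAt_pdz hW t z
    have h2 : HasDerivAt (fun z' => W (t, z'))
        (deriv (u2 t) z - deriv ubar z) z :=
      ((hu2td t z).hasDerivAt).sub ((hubd z).hasDerivAt)
    exact h1.unique h2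
  have hwzz_eq : ∀ t z, pdz (pdz W) (t, z)
      = deriv (deriv (u2 t)) z - deriv (deriv ubar) z := by
    intro t z
    have h1 := hasDerivAt_pdz (contDiff_pdz hW) t z
    have e : (fun z' => pdz W (t, z')) = fun z' => deriv (u2 t) z' - deriv ubar z' :=
      funext fun z' => hwz_eq t z'
    have h2 : HasDerivAt (fun z' => pdz W (t, z'))
        (deriv (deriv (u2 t)) z - deriv (deriv ubar) z) z := by
      rw [e]
      exact ((hu2td' t z).hasDerivAt).sub ((hubd' z).hasDerivAt)
    exact h1.unique h2
  -- time derivative (heat equation for W)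
  have htime : ∀ t z, HasDerivAt (fun s => W (s, z)) (ν * pdz (pdz W) (t, z)) t := by
    intro t z
    have h := (hu2_heat t z).sub_const (ubar z)
    have e : ν * pdz (pdz W) (t, z) = ν * deriv (deriv (u2 t)) z + g * θH z := by
      rw [hwzz_eq t z, mul_sub, hubar_ode z]; ring
    rw [e]; exact h
  -- periodicity
  have hWper : ∀ t z, W (t, z + L) = W (t, z) := by
    intro t z; simp only [hWdef]; rw [hu2_per, hubar_per]
  have hWzper : ∀ t z, pdz W (t, z + L) = pdz W (t, z) := by
    intro t z
    have e : (fun z' => W (t, z' + L)) = fun z' => W (t, z') :=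
      funext fun z' => hWper t z'
    calc pdz W (t, z + L) = deriv (fun z' => W (t, z')) (z + L) := by
          rw [deriv_slice hW t]
      _ = deriv (fun z' => W (t, z' + L)) z := (deriv_comp_add_const _ _ _).symm
      _ = deriv (fun z' => W (t, z')) z := by rw [e]
      _ = pdz W (t, z) := by rw [deriv_slice hW t]
  have hWc : Continuous W := hW.continuous
  have hWzc : Continuous (pdz W) := (contDiff_pdz hW).continuous
  have hWzzc : Continuous (pdz (pdz W)) := (contDiff_pdz (contDiff_pdz hW)).continuous
  -- the mean is conserved and zero
  have hmean : ∀ t, (∫ z in (0:ℝ)..L, W (t, z)) = 0 := by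
    set M : ℝ → ℝ := fun t => ∫ z in (0:ℝ)..L, W (t, z) with hMdef
    have hM : ∀ t, HasDerivAt M (∫ z in (0:ℝ)..L, ν * pdz (pdz W) (t, z)) t := by
      intro t
      exact hasDerivAt_param W (fun p => ν * pdz (pdz W) p) 0 L hWc
        (continuous_const.mul hWzzc) (fun p => htime p.1 p.2) t
    have hMzero : ∀ t, (∫ z in (0:ℝ)..L, ν * pdz (pdz W) (t, z)) = 0 := by
      intro t
      rw [intervalIntegral.integral_const_mul]
      have hftc := intervalIntegral.integral_eq_sub_of_hasDerivAt
        (f := fun z => pdz W (t, z)) (f' := fun z => pdz (pdz W) (t, z))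
        (fun z _ => hasDerivAt_pdz (contDiff_pdz hW) t z)
        ((hWzzc.comp (continuous_const.prodMk continuous_id)).intervalIntegrable 0 L)
      rw [hftc]
      have h2 : pdz W (t, L) = pdz W (t, 0) := by
        have := hWzper t 0; rwa [zero_add] at this
      show ν * (pdz W (t, L) - pdz W (t, 0)) = 0
      rw [h2]; ring
    have hMconst : ∀ t, M t = M 0 := fun t =>
      is_const_of_deriv_eq_zero
        (fun s => ((hM s).differentiableAt : DifferentiableAt ℝ M s))
        (fun s => by rw [(hM s).deriv]; exact hMzero s) t 0
    intro t
    have hM0 : M 0 = 0 := by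
      have e : (fun z => W (0, z)) = fun z => aH z - ubar z :=
        funext fun z => by simp only [hWdef]; rw [hu2_init]
      have haHc : Continuous aH := by
        have : aH = u2 0 := funext fun z => (hu2_init z).symm
        rw [this]; exact (hu2t 0).continuous
      rw [hMdef]
      simp only []
      rw [show (∫ z in (0:ℝ)..L, W (0, z)) = ∫ z in (0:ℝ)..L, (aH z - ubar z) by
        rw [e]]
      rw [intervalIntegral.integral_sub (haHc.intervalIntegrable _ _)
        (hub.continuous.intervalIntegrable _ _), ha_mf, hubar_mf]
      ring
    rw [show (∫ z in (0:ℝ)..L, W (t, z)) = M t from rfl, hMconst t, hM0]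
  -- energy and its derivative
  set E : ℝ → ℝ := fun t => ∫ z in (0:ℝ)..L, (W (t, z))^2 with hEdef
  set E' : ℝ → ℝ := fun t => ∫ z in (0:ℝ)..L, 2 * W (t, z) * (ν * pdz (pdz W) (t, z))
    with hE'def
  have hE : ∀ t, HasDerivAt E (E' t) t := by
    intro t
    refine hasDerivAt_param (fun p => (W p)^2)
      (fun p => 2 * W p * (ν * pdz (pdz W) p)) 0 L (hWc.pow 2)
      (((continuous_const.mul hWc).mul (continuous_const.mul hWzzc))) ?_ t
    intro p
    have := (htime p.1 p.2).fun_pow 2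
    simpa [pow_one] using this
  have hEnn : ∀ t, 0 ≤ E t := fun t =>
    intervalIntegral.integral_nonneg hL.le (fun _ _ => sq_nonneg _)
  -- dissipation bound
  have hE'le : ∀ t, E' t ≤ -(2*ν/L^2) * E t := by
    intro t
    -- integration by parts
    have hprod : ∀ z, HasDerivAt (fun z' => W (t, z') * pdz W (t, z'))
        ((pdz W (t, z))^2 + W (t, z) * pdz (pdz W) (t, z)) z := by
      intro z
      have h1 := hasDerivAt_pdz hW t z
      have h2 := hasDerivAt_pdz (contDiff_pdz hW) t z
      have := h1.fun_mul h2
      exact this.congr_deriv (by ring)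
    have c1 : Continuous (fun z : ℝ => (pdz W (t, z))^2) :=
      (hWzc.comp (continuous_const.prodMk continuous_id)).pow 2
    have c2 : Continuous (fun z : ℝ => W (t, z) * pdz (pdz W) (t, z)) :=
      (hWc.comp (continuous_const.prodMk continuous_id)).mul
        (hWzzc.comp (continuous_const.prodMk continuous_id))
    have hftc := intervalIntegral.integral_eq_sub_of_hasDerivAt
      (fun z _ => hprod z) ((c1.add c2).intervalIntegrable 0 L)
    have hbdry : W (t, L) * pdz W (t, L) - W (t, 0) * pdz W (t, 0) = 0 := by
      have h1 : W (t, L) = W (t, 0) := by have := hWper t 0; rwa [zero_add] at this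
      have h2 : pdz W (t, L) = pdz W (t, 0) := by
        have := hWzper t 0; rwa [zero_add] at this
      rw [h1, h2]; ring
    rw [hbdry] at hftc
    rw [intervalIntegral.integral_add (c1.intervalIntegrable 0 L)
        (c2.intervalIntegrable 0 L)] at hftc
    have hibp : (∫ z in (0:ℝ)..L, W (t, z) * pdz (pdz W) (t, z))
        = -∫ z in (0:ℝ)..L, (pdz W (t, z))^2 := by linarith
    have hE'val : E' t = -(2*ν) * ∫ z in (0:ℝ)..L, (pdz W (t, z))^2 := by
      rw [hE'def]
      simp only []
      rw [show (fun z => 2 * W (t, z) * (ν * pdz (pdz W) (t, z)))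
          = fun z => (2*ν) * (W (t, z) * pdz (pdz W) (t, z)) by
        funext z; ring]
      rw [intervalIntegral.integral_const_mul, hibp]
      ring
    -- Poincaré
    have hpoin := poincare L hL (fun z => W (t, z)) (fun z => pdz W (t, z))
      (fun z => hasDerivAt_pdz hW t z)
      (hWzc.comp (continuous_const.prodMk continuous_id)) (hmean t)
    have hc : (0:ℝ) < 2*ν/L^2 := by positivity
    have h1 : (2*ν/L^2) * E t ≤ (2*ν/L^2) * (L^2 * ∫ z in (0:ℝ)..L, (pdz W (t, z))^2) :=
      mul_le_mul_of_nonneg_left hpoin hc.le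
    have h2 : (2*ν/L^2) * (L^2 * ∫ z in (0:ℝ)..L, (pdz W (t, z))^2)
        = 2*ν * ∫ z in (0:ℝ)..L, (pdz W (t, z))^2 := by
      field_simp
    rw [hE'val]
    linarith
  -- exponential decay
  have hdecay : Filter.Tendsto E Filter.atTop (nhds 0) :=
    decay (2*ν/L^2) (by positivity) E E' hE hE'le hEnn
  -- identify the L² norm with L * E
  have hfun : ∀ t, l2V L (fun x =>
      EuclideanSpace.single (1 : Fin 2) (u2 t (x 0)) -
        EuclideanSpace.single (1 : Fin 2) (ubar (x 0))) = E t * L := by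
    intro t
    have e1 : (fun x : E2 =>
        EuclideanSpace.single (1 : Fin 2) (u2 t (x 0)) -
          EuclideanSpace.single (1 : Fin 2) (ubar (x 0)))
        = fun x : E2 => EuclideanSpace.single (1 : Fin 2) (W (t, x 0)) := by
      funext x
      ext j
      by_cases hj : j = 1 <;> simp [EuclideanSpace.single_apply, hj, hWdef]
    rw [e1, l2V_single L hL.le (fun z => W (t, z))]
    congr 1
    rw [MeasureTheory.integral_Ico_eq_integral_Ioo, ← MeasureTheory.integral_Ioc_eq_integral_Ioo,
      hEdef]
    simp only []
    rw [intervalIntegral.integral_of_le hL.le]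
  have : Filter.Tendsto (fun t => E t * L) Filter.atTop (nhds 0) := by
    have := hdecay.mul_const L
    simpa using this
  simpa only [hfun] using this

/-- **Horizontal (columnar) solutions of the semi-dissipative Boussinesq system.**
Let `θH ∈ L²([0,L])` be mean-free, a function of `x₁` alone, and let `u₂(x₁,t)` solve
the forced heat equation `∂ₜu₂ = ν ∂²_{x₁} u₂ + g θH` with periodic mean-free initial
data `aH`.  Then `((0, u₂), θH, p = 0)` solves the 2D semi-dissipative Boussinesq
system, and as `t → ∞` the solution converges in `L²` to the steady state
`((0, ū₂), θH)`, where `ū₂` is the unique mean-free periodic solution of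
`ν ū₂'' = −g θH`. -/
theorem horizontal_solutions (ν g L : ℝ) (hν : 0 < ν) (hL : 0 < L)
    (θH aH ubar : ℝ → ℝ) (u2 : ℝ → ℝ → ℝ)
    (hθ_per : ∀ z, θH (z + L) = θH z) (hθ_mf : (∫ z in (0:ℝ)..L, θH z) = 0)
    (hθ_sm : ContDiff ℝ (⊤ : ℕ∞) θH)
    (ha_per : ∀ z, aH (z + L) = aH z) (ha_mf : (∫ z in (0:ℝ)..L, aH z) = 0)
    (hu2_sm : ContDiff ℝ (⊤ : ℕ∞) (Function.uncurry u2))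
    (hu2_init : ∀ z, u2 0 z = aH z)
    (hu2_per : ∀ t z, u2 t (z + L) = u2 t z)
    (hu2_heat : ∀ t z, HasDerivAt (fun s => u2 s z)
      (ν * deriv (deriv (u2 t)) z + g * θH z) t)
    -- `ū₂` : the (unique) mean-free periodic steady profile, `ν ū₂'' = −g θH` :
    (hubar_sm : ContDiff ℝ (⊤ : ℕ∞) ubar)
    (hubar_per : ∀ z, ubar (z + L) = ubar z)
    (hubar_mf : (∫ z in (0:ℝ)..L, ubar z) = 0)
    (hubar_ode : ∀ z, ν * deriv (deriv ubar) z = -(g * θH z))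
    (hubar_unique : ∀ w : ℝ → ℝ, ContDiff ℝ (⊤ : ℕ∞) w → (∀ z, w (z + L) = w z) →
      (∫ z in (0:ℝ)..L, w z) = 0 → (∀ z, ν * deriv (deriv w) z = -(g * θH z)) →
      w = ubar) :
    Boussinesq ν g L Set.univ
        (fun t x => EuclideanSpace.single 1 (u2 t (x 0)))
        (fun _ x => θH (x 0)) (fun _ _ => 0) ∧
      Filter.Tendsto
        (fun t => l2V L (fun x =>
          EuclideanSpace.single (1 : Fin 2) (u2 t (x 0)) -
            EuclideanSpace.single (1 : Fin 2) (ubar (x 0))))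
        Filter.atTop (nhds 0) := by
  exact ⟨part1 ν g L θH u2 hθ_per hθ_sm hu2_sm hu2_per hu2_heat,
    part2 ν g L hν hL θH aH ubar u2 ha_mf hu2_sm hu2_init hu2_per hu2_heat
      hubar_sm hubar_per hubar_mf hubar_ode⟩
end
end

section
/- Let k = (k₁,k₂) ∈ ℤ², k ≠ 0, with k₁ + k₂ = 0, let h be a smooth mean-free L-periodic function of one variable, and let f(z,t) solve the forced heat equation ∂_t f = ν|k|² f_{zz} + (g/2)h with periodic mean-free data. Then u(x,t) = (f(k·x,t), f(k·x,t)), θ(x) = h(k·x), and p(x) = −(g/(2k₁))H(k·x) with H' = h, constitute a solution of the 2D semi-dissipative Boussinesq system; in particular u is divergence-free, and (u·∇)u = 0 and (u·∇)θ = 0. -/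
noncomputable section
open MeasureTheory Real Filter Topology
open scoped RealInnerProductSpace

/-! ### Auxiliary machinery for plane-wave solutions -/

def lmap (a b : ℝ) : E2 →L[ℝ] ℝ := a • EuclideanSpace.proj 0 + b • EuclideanSpace.proj 1

lemma lmap_apply (a b : ℝ) (x : E2) : lmap a b x = a * x 0 + b * x 1 := by
  simp [lmap]

lemma lmap_eb (a b : ℝ) : lmap a b (eb 0) = a ∧ lmap a b (eb 1) = b := by
  constructor <;> simp [lmap_apply, eb, EuclideanSpace.single_apply]

lemma key_hasFDerivAt (a b : ℝ) {φ : ℝ → ℝ} {d : ℝ} {x : E2}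
    (hφ : HasDerivAt φ d (a * x 0 + b * x 1)) :
    HasFDerivAt (fun y : E2 => φ (a * y 0 + b * y 1)) (d • lmap a b) x := by
  have h1 : HasDerivAt φ d (lmap a b x) := by rwa [lmap_apply]
  have := h1.comp_hasFDerivAt x (lmap a b).hasFDerivAt
  have heq : (fun y : E2 => φ (a * y 0 + b * y 1)) = φ ∘ lmap a b :=
    funext fun y => by simp [Function.comp, lmap_apply]
  rw [heq]; exact this

lemma pd_line (a b : ℝ) {φ : ℝ → ℝ} (hφ : Differentiable ℝ φ) (i : Fin 2) (x : E2) :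
    pd (fun y : E2 => φ (a * y 0 + b * y 1)) i x
      = deriv φ (a * x 0 + b * x 1) * lmap a b (eb i) := by
  rw [pd, (key_hasFDerivAt a b ((hφ _).hasDerivAt)).fderiv]
  simp [smul_eq_mul]

lemma pd_line_mul (a b c : ℝ) {ψ : ℝ → ℝ} (hψ : Differentiable ℝ ψ) (i : Fin 2) (x : E2) :
    pd (fun y : E2 => ψ (a * y 0 + b * y 1) * c) i x
      = deriv ψ (a * x 0 + b * x 1) * lmap a b (eb i) * c := by
  rw [pd, ((key_hasFDerivAt a b ((hψ _).hasDerivAt)).mul_const c).fderiv]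
  simp [smul_eq_mul]; ring

lemma lap_line (a b : ℝ) {φ : ℝ → ℝ} (h1 : Differentiable ℝ φ)
    (h2 : Differentiable ℝ (deriv φ)) (x : E2) :
    lap (fun y : E2 => φ (a * y 0 + b * y 1)) x
      = (a ^ 2 + b ^ 2) * deriv (deriv φ) (a * x 0 + b * x 1) := by
  rw [lap]
  have hi : ∀ i : Fin 2, (fun y : E2 => pd (fun y : E2 => φ (a * y 0 + b * y 1)) i y)
      = fun y : E2 => deriv φ (a * y 0 + b * y 1) * lmap a b (eb i) :=
    fun i => funext fun y => pd_line a b h1 i y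
  simp only [hi]
  rw [Fin.sum_univ_two, pd_line_mul a b _ h2, pd_line_mul a b _ h2,
    (lmap_eb a b).1, (lmap_eb a b).2]
  ring

lemma toDual_vec (a b : ℝ) :
    (InnerProductSpace.toDual ℝ E2)
      ((EuclideanSpace.single 0 a + EuclideanSpace.single 1 b : E2)) = lmap a b := by
  ext v
  rw [InnerProductSpace.toDual_apply_apply]
  simp [PiLp.inner_apply, Fin.sum_univ_two, EuclideanSpace.single_apply, lmap_apply]
  ring

lemma grad_line (a b : ℝ) {φ : ℝ → ℝ} (hφ : Differentiable ℝ φ) (x : E2) :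
    grad (fun y : E2 => φ (a * y 0 + b * y 1)) x
      = deriv φ (a * x 0 + b * x 1)
          • (EuclideanSpace.single 0 a + EuclideanSpace.single 1 b : E2) := by
  have hg : HasGradientAt (fun y : E2 => φ (a * y 0 + b * y 1))
      (deriv φ (a * x 0 + b * x 1)
        • (EuclideanSpace.single 0 a + EuclideanSpace.single 1 b : E2)) x := by
    rw [hasGradientAt_iff_hasFDerivAt, _root_.map_smul, toDual_vec]
    exact key_hasFDerivAt a b ((hφ _).hasDerivAt)
  exact hg.gradient

def cvec : E2 := EuclideanSpace.single 0 1 + EuclideanSpace.single 1 1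

lemma single_single_eq_smul (A : ℝ) :
    (EuclideanSpace.single (0 : Fin 2) A + EuclideanSpace.single 1 A : E2) = A • cvec := by
  ext i
  fin_cases i <;> simp [cvec, EuclideanSpace.single_apply]

lemma hasFDerivAt_vec (a b : ℝ) {φ : ℝ → ℝ} {d : ℝ} {x : E2} :
    HasDerivAt φ d (a * x 0 + b * x 1) →
    HasFDerivAt (fun y : E2 =>
        (EuclideanSpace.single (0:Fin 2) (φ (a * y 0 + b * y 1))
          + EuclideanSpace.single 1 (φ (a * y 0 + b * y 1)) : E2))
      ((d • lmap a b).smulRight cvec) x := by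
  intro hφ
  have heq : (fun y : E2 =>
      (EuclideanSpace.single (0:Fin 2) (φ (a * y 0 + b * y 1))
        + EuclideanSpace.single 1 (φ (a * y 0 + b * y 1)) : E2))
      = fun y : E2 => φ (a * y 0 + b * y 1) • cvec :=
    funext fun y => single_single_eq_smul _
  rw [heq]
  exact (key_hasFDerivAt a b hφ).smul_const cvec

/-- **Plane-wave solutions of the semi-dissipative Boussinesq system.**
Let `k = (k₁,k₂) ∈ ℤ²`, `k ≠ 0`, `k₁ + k₂ = 0`, `h` a smooth mean-free `L`-periodic
function of one variable, and `f(z,t)` a solution of the forced heat equation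
`∂ₜ f = ν|k|² f_zz + (g/2) h` with periodic mean-free data.  Then
`u(x,t) = (f(k·x,t), f(k·x,t))`, `θ(x) = h(k·x)`, `p(x) = −(g/(2k₁)) H(k·x)` with
`H' = h` solve the system; in particular `u` is divergence-free and the nonlinear
terms `(u·∇)u` and `(u·∇)θ` vanish. -/
theorem plane_wave_solutions (ν g L : ℝ) (hν : 0 < ν) (hL : 0 < L)
    (k₁ k₂ : ℤ) (hk : k₁ + k₂ = 0) (hk_ne : ¬(k₁ = 0 ∧ k₂ = 0))
    (h H : ℝ → ℝ) (f : ℝ → ℝ → ℝ)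
    (hh_sm : ContDiff ℝ (⊤ : ℕ∞) h)
    (hh_per : ∀ z, h (z + L) = h z) (hh_mf : (∫ z in (0:ℝ)..L, h z) = 0)
    (hH : ∀ z, HasDerivAt H (h z) z)
    (hf_sm : ContDiff ℝ (⊤ : ℕ∞) (Function.uncurry f))
    (hf_per : ∀ t z, f t (z + L) = f t z)
    (hf_mf : (∫ z in (0:ℝ)..L, f 0 z) = 0)
    (hf_heat : ∀ t z, HasDerivAt (fun s => f s z)
      (ν * ((k₁:ℝ) ^ 2 + (k₂:ℝ) ^ 2) * deriv (deriv (f t)) z + (g / 2) * h z) t) :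
    Boussinesq ν g L Set.univ
        (fun t x => EuclideanSpace.single 0 (f t ((k₁:ℝ) * x 0 + (k₂:ℝ) * x 1))
          + EuclideanSpace.single 1 (f t ((k₁:ℝ) * x 0 + (k₂:ℝ) * x 1)))
        (fun _ x => h ((k₁:ℝ) * x 0 + (k₂:ℝ) * x 1))
        (fun _ x => -(g / (2 * (k₁:ℝ))) * H ((k₁:ℝ) * x 0 + (k₂:ℝ) * x 1)) ∧
      (∀ t x, divg (fun y =>
          EuclideanSpace.single (0 : Fin 2) (f t ((k₁:ℝ) * y 0 + (k₂:ℝ) * y 1))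
          + EuclideanSpace.single (1 : Fin 2) (f t ((k₁:ℝ) * y 0 + (k₂:ℝ) * y 1))) x = 0) ∧
      (∀ t x, fderiv ℝ (fun y =>
          EuclideanSpace.single (0 : Fin 2) (f t ((k₁:ℝ) * y 0 + (k₂:ℝ) * y 1))
          + EuclideanSpace.single (1 : Fin 2) (f t ((k₁:ℝ) * y 0 + (k₂:ℝ) * y 1))) x
          (EuclideanSpace.single (0 : Fin 2) (f t ((k₁:ℝ) * x 0 + (k₂:ℝ) * x 1))
            + EuclideanSpace.single (1 : Fin 2) (f t ((k₁:ℝ) * x 0 + (k₂:ℝ) * x 1))) = 0) ∧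
      (∀ t x, ⟪(EuclideanSpace.single (0 : Fin 2) (f t ((k₁:ℝ) * x 0 + (k₂:ℝ) * x 1))
            + EuclideanSpace.single 1 (f t ((k₁:ℝ) * x 0 + (k₂:ℝ) * x 1)) : E2),
          grad (fun y => h ((k₁:ℝ) * y 0 + (k₂:ℝ) * y 1)) x⟫ = 0) := by

  have hk1z : k₁ ≠ 0 := by rintro rfl; exact hk_ne ⟨rfl, by omega⟩
  have hk1 : (k₁:ℝ) ≠ 0 := Int.cast_ne_zero.mpr hk1z
  have hb : (k₂:ℝ) = -(k₁:ℝ) := by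
    have : k₂ = -k₁ := by omega
    exact_mod_cast this
  -- differentiability facts
  have hft : ∀ t, ContDiff ℝ ((⊤:ℕ∞) : WithTop ℕ∞) (f t) := fun t => by
    have : ContDiff ℝ (⊤ : ℕ∞) (fun z => Function.uncurry f (t, z)) :=
      hf_sm.comp (contDiff_const.prodMk contDiff_id)
    exact this.of_le (by simp)
  have hd1 : ∀ t, Differentiable ℝ (f t) := fun t => (contDiff_infty_iff_deriv.mp (hft t)).1
  have hd2 : ∀ t, Differentiable ℝ (deriv (f t)) :=
    fun t => (contDiff_infty_iff_deriv.mp (hft t)).2.differentiable (by simp)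
  have hhd : Differentiable ℝ h := hh_sm.differentiable (by simp)
  have hHd : Differentiable ℝ H := fun z => (hH z).differentiableAt
  -- periodicity
  have hfP : ∀ t, Function.Periodic (f t) L := fun t z => hf_per t z
  have hhP : Function.Periodic h L := hh_per
  have hHP : Function.Periodic H L := by
    intro z
    have hsub : (∫ w in z..(z+L), h w) = H (z+L) - H z :=
      intervalIntegral.integral_eq_sub_of_hasDerivAt (fun w _ => hH w)
        (hh_sm.continuous.intervalIntegrable _ _)
    have h2 : (∫ w in z..(z+L), h w) = ∫ w in (0:ℝ)..(0+L), h w :=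
      hhP.intervalIntegral_add_eq z 0
    rw [zero_add, hh_mf] at h2
    rw [h2] at hsub
    linarith
  have hint : ∀ (φ : ℝ → ℝ), Function.Periodic φ L → ∀ (m : ℤ) (z : ℝ),
      φ (z + (m:ℝ) * L) = φ z := fun φ hφ m z => (hφ.int_mul m) z
  -- coordinate computations for periodicity
  have e0 : ∀ x : E2, (k₁:ℝ) * (x + L • eb 0) 0 + (k₂:ℝ) * (x + L • eb 0) 1
      = ((k₁:ℝ) * x 0 + (k₂:ℝ) * x 1) + (k₁:ℝ) * L := by
    intro x
    simp [eb, EuclideanSpace.single_apply]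
    ring
  have e1 : ∀ x : E2, (k₁:ℝ) * (x + L • eb 1) 0 + (k₂:ℝ) * (x + L • eb 1) 1
      = ((k₁:ℝ) * x 0 + (k₂:ℝ) * x 1) + (k₂:ℝ) * L := by
    intro x
    simp [eb, EuclideanSpace.single_apply]
    ring
  -- fderiv of the velocity field
  have hUf : ∀ t (x : E2), fderiv ℝ (fun y : E2 =>
      (EuclideanSpace.single (0:Fin 2) (f t ((k₁:ℝ) * y 0 + (k₂:ℝ) * y 1))
        + EuclideanSpace.single 1 (f t ((k₁:ℝ) * y 0 + (k₂:ℝ) * y 1)) : E2)) x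
      = ((deriv (f t) ((k₁:ℝ) * x 0 + (k₂:ℝ) * x 1) • lmap (k₁:ℝ) (k₂:ℝ)).smulRight cvec) :=
    fun t x => (hasFDerivAt_vec _ _ ((hd1 t _).hasDerivAt)).fderiv
  -- the nonlinear term vanishes
  have hNL : ∀ t (x : E2), fderiv ℝ (fun y : E2 =>
      (EuclideanSpace.single (0:Fin 2) (f t ((k₁:ℝ) * y 0 + (k₂:ℝ) * y 1))
        + EuclideanSpace.single 1 (f t ((k₁:ℝ) * y 0 + (k₂:ℝ) * y 1)) : E2)) x
      ((EuclideanSpace.single (0:Fin 2) (f t ((k₁:ℝ) * x 0 + (k₂:ℝ) * x 1))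
        + EuclideanSpace.single 1 (f t ((k₁:ℝ) * x 0 + (k₂:ℝ) * x 1)) : E2)) = 0 := by
    intro t x
    rw [hUf]
    ext i
    fin_cases i <;>
      simp [ContinuousLinearMap.smulRight_apply, ContinuousLinearMap.smul_apply,
        lmap_apply, cvec, EuclideanSpace.single_apply, hb]
  -- divergence vanishes
  have hDiv : ∀ t (x : E2), divg (fun y : E2 =>
      (EuclideanSpace.single (0:Fin 2) (f t ((k₁:ℝ) * y 0 + (k₂:ℝ) * y 1))
        + EuclideanSpace.single 1 (f t ((k₁:ℝ) * y 0 + (k₂:ℝ) * y 1)) : E2)) x = 0 := by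
    intro t x
    rw [divg, Fin.sum_univ_two, hUf]
    simp [ContinuousLinearMap.smulRight_apply, ContinuousLinearMap.smul_apply,
      lmap_apply, cvec, eb, EuclideanSpace.single_apply, hb]
  -- transport term vanishes
  have hTr : ∀ t (x : E2), ⟪(EuclideanSpace.single (0:Fin 2) (f t ((k₁:ℝ) * x 0 + (k₂:ℝ) * x 1))
        + EuclideanSpace.single 1 (f t ((k₁:ℝ) * x 0 + (k₂:ℝ) * x 1)) : E2),
      grad (fun y : E2 => h ((k₁:ℝ) * y 0 + (k₂:ℝ) * y 1)) x⟫ = 0 := by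
    intro t x
    rw [grad_line _ _ hhd]
    simp [PiLp.inner_apply, Fin.sum_univ_two, EuclideanSpace.single_apply, hb]
  refine ⟨?_, fun t x => hDiv t x, fun t x => hNL t x, fun t x => hTr t x⟩
  intro t _ x
  refine ⟨?_, ?_, hDiv t x, ?_, ?_, ?_⟩
  · -- momentum equation
    -- time derivative
    have hDt : deriv (fun s => (EuclideanSpace.single (0:Fin 2)
          (f s ((k₁:ℝ) * x 0 + (k₂:ℝ) * x 1))
        + EuclideanSpace.single 1 (f s ((k₁:ℝ) * x 0 + (k₂:ℝ) * x 1)) : E2)) t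
        = (ν * ((k₁:ℝ)^2 + (k₂:ℝ)^2) * deriv (deriv (f t)) ((k₁:ℝ) * x 0 + (k₂:ℝ) * x 1)
            + (g/2) * h ((k₁:ℝ) * x 0 + (k₂:ℝ) * x 1)) • cvec := by
      have heq : (fun s => (EuclideanSpace.single (0:Fin 2)
            (f s ((k₁:ℝ) * x 0 + (k₂:ℝ) * x 1))
          + EuclideanSpace.single 1 (f s ((k₁:ℝ) * x 0 + (k₂:ℝ) * x 1)) : E2))
          = fun s => f s ((k₁:ℝ) * x 0 + (k₂:ℝ) * x 1) • cvec :=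
        funext fun s => single_single_eq_smul _
      rw [heq]
      exact ((hf_heat t _).smul_const cvec).deriv
    -- pressure gradient
    have hGp : grad (fun y : E2 =>
          -(g / (2 * (k₁:ℝ))) * H ((k₁:ℝ) * y 0 + (k₂:ℝ) * y 1)) x
        = (-(g / (2 * (k₁:ℝ))) * h ((k₁:ℝ) * x 0 + (k₂:ℝ) * x 1))
            • (EuclideanSpace.single 0 (k₁:ℝ) + EuclideanSpace.single 1 (k₂:ℝ) : E2) := by
      have hder : deriv (fun w => -(g / (2 * (k₁:ℝ))) * H w) ((k₁:ℝ) * x 0 + (k₂:ℝ) * x 1)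
          = -(g / (2 * (k₁:ℝ))) * h ((k₁:ℝ) * x 0 + (k₂:ℝ) * x 1) := by
        rw [deriv_const_mul _ (hHd _), (hH _).deriv]
      have := grad_line (k₁:ℝ) (k₂:ℝ) (φ := fun w => -(g / (2 * (k₁:ℝ))) * H w)
        (fun w => (hHd w).const_mul _) x
      rw [hder] at this
      exact this
    -- vector Laplacian
    have hVL : vecLap (fun y : E2 =>
          (EuclideanSpace.single (0:Fin 2) (f t ((k₁:ℝ) * y 0 + (k₂:ℝ) * y 1))
            + EuclideanSpace.single 1 (f t ((k₁:ℝ) * y 0 + (k₂:ℝ) * y 1)) : E2)) x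
        = (((k₁:ℝ)^2 + (k₂:ℝ)^2)
            * deriv (deriv (f t)) ((k₁:ℝ) * x 0 + (k₂:ℝ) * x 1)) • cvec := by
      rw [vecLap, Fin.sum_univ_two]
      have hc0 : (fun y : E2 => (EuclideanSpace.single (0:Fin 2)
            (f t ((k₁:ℝ) * y 0 + (k₂:ℝ) * y 1))
          + EuclideanSpace.single 1 (f t ((k₁:ℝ) * y 0 + (k₂:ℝ) * y 1)) : E2) (0:Fin 2))
          = fun y : E2 => f t ((k₁:ℝ) * y 0 + (k₂:ℝ) * y 1) := by
        funext y; simp [EuclideanSpace.single_apply]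
      have hc1 : (fun y : E2 => (EuclideanSpace.single (0:Fin 2)
            (f t ((k₁:ℝ) * y 0 + (k₂:ℝ) * y 1))
          + EuclideanSpace.single 1 (f t ((k₁:ℝ) * y 0 + (k₂:ℝ) * y 1)) : E2) (1:Fin 2))
          = fun y : E2 => f t ((k₁:ℝ) * y 0 + (k₂:ℝ) * y 1) := by
        funext y; simp [EuclideanSpace.single_apply]
      rw [hc0, hc1, lap_line _ _ (hd1 t) (hd2 t)]
      exact single_single_eq_smul _
    rw [hDt, hNL t x, hGp, hVL]
    ext i
    fin_cases i <;>
      simp [cvec, gvec, EuclideanSpace.single_apply, hb] <;>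
      field_simp <;> ring
  · -- transport equation
    have : deriv (fun _ : ℝ => h ((k₁:ℝ) * x 0 + (k₂:ℝ) * x 1)) t = 0 := deriv_const _ _
    rw [this, zero_add]
    exact hTr t x
  · -- periodicity of u
    intro y i
    fin_cases i <;> beta_reduce <;> simp only [Fin.zero_eta, Fin.mk_one]
    · rw [e0 y, hint (f t) (hfP t) k₁]
    · rw [e1 y, hint (f t) (hfP t) k₂]
  · -- periodicity of θ
    intro y i
    fin_cases i <;> beta_reduce <;> simp only [Fin.zero_eta, Fin.mk_one]
    · rw [e0 y, hint h hhP k₁]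
    · rw [e1 y, hint h hhP k₂]
  · -- periodicity of p
    intro y i
    fin_cases i <;> beta_reduce <;> simp only [Fin.zero_eta, Fin.mk_one]
    · rw [e0 y, hint H hHP k₁]
    · rw [e1 y, hint H hHP k₂]
end
end
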